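/- Let L : A × B → ℝ where A is a convex subset of a reflexive Banach space, B a convex subset of a normed space, L(·, v) is concave and upper-semicontinuous for each v ∈ B, L(u, ·) is affine and continuous for each u ∈ A, and A is bounded and closed. Then sup_{u∈A} inf_{v∈B} L(u,v) = inf_{v∈B} sup_{u∈A} L(u,v). -/

import Mathlib

/-!
In a reflexive space the canonical embedding identifies the weak topology with the weak-star
topology of the bidual, so by Banach–Alaoglu and Mazur's theorem the bounded closed convex set `A`
is weakly compact. Superlevel sets of `L(·, v)` are closed and convex, hence weakly closed, so
`L(·, v)` stays upper semicontinuous for the weak topology. Sion's minimax theorem then applies on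
`A` with the weak topology, affinity and continuity of `L(u, ·)` providing convexity and lower
semicontinuity in the other variable.
-/

open Set OrderDual

section WeakTopology

variable {E : Type*} [NormedAddCommGroup E] [NormedSpace ℝ E] {A : Set E}

theorem Convex.isClosed_toWeakSpace_image (hconv : Convex ℝ A) (hA : IsClosed A) :
    IsClosed (toWeakSpace ℝ E '' A) := by
  rw [← hA.closure_eq, hconv.toWeakSpace_closure ℝ]
  exact isClosed_closure

theorem ConcaveOn.upperSemicontinuousOn_toWeakSpace_image {f : E → ℝ} (hf : ConcaveOn ℝ A f)
    (hA : IsClosed A) (husc : UpperSemicontinuousOn f A) :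
    UpperSemicontinuousOn (fun x => f ((toWeakSpace ℝ E).symm x)) (toWeakSpace ℝ E '' A) := by
  refine upperSemicontinuousOn_iff_preimage_Ici.2 fun b => ?_
  obtain ⟨v, hv, hAv⟩ := upperSemicontinuousOn_iff_preimage_Ici.1 husc b
  have hC : IsClosed (A ∩ f ⁻¹' Ici b) := hAv ▸ hA.inter hv
  refine ⟨toWeakSpace ℝ E '' (A ∩ f ⁻¹' Ici b), (hf.convex_ge b).isClosed_toWeakSpace_image hC, ?_⟩
  rw [inter_eq_right.2 (image_mono inter_subset_left), ← image_inter_preimage]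
  simp only [preimage_preimage, LinearEquiv.symm_apply_apply]

theorem Convex.isCompact_toWeakSpace_image
    (hrefl : Function.Surjective (NormedSpace.inclusionInDoubleDual ℝ E))
    (hconv : Convex ℝ A) (hbdd : Bornology.IsBounded A) (hA : IsClosed A) :
    IsCompact (toWeakSpace ℝ E '' A) := by
  rw [← (hconv.isClosed_toWeakSpace_image hA).closure_eq]
  refine NormedSpace.isCompact_closure_of_isBounded ℝ E _ ?_ ?_
  · rwa [preimage_image_eq _ (toWeakSpace ℝ E).injective]
  · rw [(show Function.Surjective (NormedSpace.inclusionInDoubleDualWeak ℝ E) from hrefl).range_eq]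
    exact subset_univ _

end WeakTopology

namespace Sion

variable {E F : Type*}
  [TopologicalSpace E] [AddCommGroup E] [Module ℝ E] [IsTopologicalAddGroup E] [ContinuousSMul ℝ E]
  [TopologicalSpace F] [AddCommGroup F] [Module ℝ F] [IsTopologicalAddGroup F] [ContinuousSMul ℝ F]
  {X : Set E} {Y : Set F} {f : E → F → ℝ}

theorem ciSup_ciInf_eq_ciInf_ciSup (ne_X : X.Nonempty) (cX : Convex ℝ X) (kX : IsCompact X)
    (ne_Y : Y.Nonempty) (cY : Convex ℝ Y)
    (hfx : ∀ y ∈ Y, UpperSemicontinuousOn (fun x => f x y) X)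
    (hfx' : ∀ y ∈ Y, QuasiconcaveOn ℝ X fun x => f x y)
    (hfy : ∀ x ∈ X, LowerSemicontinuousOn (f x) Y) (hfy' : ∀ x ∈ X, QuasiconvexOn ℝ Y (f x))
    (hbdd : ∀ x ∈ X, BddBelow (f x '' Y)) :
    ⨆ x : X, ⨅ y : Y, f x y = ⨅ y : Y, ⨆ x : X, f x y := by
  have hglb (x) (hx : x ∈ X) : IsGLB (f x '' Y) (⨅ y : Y, f x y) := by
    rw [← sInf_image']
    exact isGLB_csInf (ne_Y.image _) (hbdd x hx)
  have hlub (y) (hy : y ∈ Y) : IsLUB ((f · y) '' X) (⨆ x : X, f x y) := by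
    rw [← sSup_image' (f := (f · y))]
    obtain ⟨x, -, hx⟩ := (hfx y hy).exists_isMaxOn ne_X kX
    exact isLUB_csSup (ne_X.image _) hx.bddAbove
  obtain ⟨x₀, hx₀⟩ := ne_X
  obtain ⟨y₀, hy₀⟩ := ne_Y
  have hsup_inf : IsLUB ((fun x => ⨅ y : Y, f x y) '' X) (⨆ x : X, ⨅ y : Y, f x y) := by
    rw [← sSup_image' (f := fun x => ⨅ y : Y, f x y)]
    refine isLUB_csSup ⟨_, x₀, hx₀, rfl⟩ ⟨⨆ x : X, f x y₀, ?_⟩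
    rintro _ ⟨x, hx, rfl⟩
    exact ((hglb x hx).1 ⟨y₀, hy₀, rfl⟩).trans ((hlub y₀ hy₀).1 ⟨x, hx, rfl⟩)
  have hinf_sup : IsGLB ((fun y => ⨆ x : X, f x y) '' Y) (⨅ y : Y, ⨆ x : X, f x y) := by
    rw [← sInf_image' (f := fun y => ⨆ x : X, f x y)]
    refine isGLB_csInf ⟨_, y₀, hy₀, rfl⟩ ⟨⨅ y : Y, f x₀ y, ?_⟩
    rintro _ ⟨y, hy, rfl⟩
    exact ((hglb x₀ hx₀).1 ⟨y, hy, rfl⟩).trans ((hlub y hy).1 ⟨x₀, hx₀, rfl⟩)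
  -- `minimax` takes the infimum over the compact variable; in `ℝᵒᵈ` it becomes the supremum.
  exact toDual.injective <|
    minimax (f := fun x y => toDual (f x y)) ⟨x₀, hx₀⟩ kX hfx hfx' cY hfy hfy' cX
      _ (fun x hx => (hglb x hx).dual) _ hsup_inf.dual
      _ (fun y hy => (hlub y hy).dual) _ hinf_sup.dual

end Sion

theorem convexOn_of_map_convexCombination_eq {F : Type*} [AddCommGroup F] [Module ℝ F]
    {B : Set F} {g : F → ℝ} (hB : Convex ℝ B)
    (hg : ∀ v₁ ∈ B, ∀ v₂ ∈ B, ∀ c : ℝ, 0 ≤ c → c ≤ 1 →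
      g (c • v₁ + (1 - c) • v₂) = c * g v₁ + (1 - c) * g v₂) :
    ConvexOn ℝ B g := by
  refine ⟨hB, fun v₁ hv₁ v₂ hv₂ a b ha hb hab => ?_⟩
  obtain rfl : b = 1 - a := by linarith
  rw [hg v₁ hv₁ v₂ hv₂ a ha (by linarith), smul_eq_mul, smul_eq_mul]

theorem stmt14_general {E F : Type*} [NormedAddCommGroup E] [NormedSpace ℝ E]
    [NormedAddCommGroup F] [NormedSpace ℝ F]
    (hrefl : Function.Surjective (NormedSpace.inclusionInDoubleDual ℝ E))
    (A : Set E) (B : Set F)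
    (hAne : A.Nonempty) (hAbdd : Bornology.IsBounded A) (hAclosed : IsClosed A)
    (hAconv : Convex ℝ A) (hBne : B.Nonempty) (hBconv : Convex ℝ B)
    (L : E → F → ℝ)
    (hconc : ∀ v ∈ B, ConcaveOn ℝ A (fun u => L u v))
    (husc : ∀ v ∈ B, UpperSemicontinuousOn (fun u => L u v) A)
    (haff : ∀ u ∈ A, ∀ v₁ ∈ B, ∀ v₂ ∈ B, ∀ c : ℝ, 0 ≤ c → c ≤ 1 →
      L u (c • v₁ + (1 - c) • v₂) = c * L u v₁ + (1 - c) * L u v₂)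
    (hcont : ∀ u ∈ A, ContinuousOn (L u) B)
    (hbdd' : BddBelow {r : ℝ | ∃ u ∈ A, ∃ v ∈ B, r = L u v}) :
    (⨆ u : A, ⨅ v : B, L u v) = ⨅ v : B, ⨆ u : A, L u v := by
  set e := toWeakSpace ℝ E
  have key := Sion.ciSup_ciInf_eq_ciInf_ciSup (X := e '' A) (f := fun x v => L (e.symm x) v)
    (hAne.image e) (hAconv.linear_image e.toLinearMap)
    (hAconv.isCompact_toWeakSpace_image hrefl hAbdd hAclosed) hBne hBconv
    (fun v hv => (hconc v hv).upperSemicontinuousOn_toWeakSpace_image hAclosed (husc v hv))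
    (fun v hv => by
      rw [e.image_eq_preimage_symm]
      exact ((hconc v hv).comp_linearMap e.symm.toLinearMap).quasiconcaveOn)
    (by
      rintro _ ⟨u, hu, rfl⟩
      simpa using (hcont u hu).lowerSemicontinuousOn)
    (by
      rintro _ ⟨u, hu, rfl⟩
      simpa using (convexOn_of_map_convexCombination_eq hBconv (haff u hu)).quasiconvexOn)
    (by
      rintro _ ⟨u, hu, rfl⟩
      refine hbdd'.mono ?_
      rintro _ ⟨v, hv, rfl⟩
      exact ⟨u, hu, v, hv, by simp⟩)
  let σ := Equiv.Set.image e A e.injective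
  simp_rw [← σ.surjective.iSup_comp] at key
  simpa [σ] using key

/-- Minimax (Ekeland–Temam): if `E` is a reflexive Banach space (the canonical inclusion
into the double dual is surjective), `A ⊆ E` is nonempty bounded closed convex,
`B` is a nonempty convex subset of a normed space, `L(·,v)` is concave and
upper semicontinuous on `A` for each `v ∈ B`, and `L(u,·)` is affine and continuous on `B`
for each `u ∈ A`, then `sup_{u∈A} inf_{v∈B} L(u,v) = inf_{v∈B} sup_{u∈A} L(u,v)`. -/
theorem stmt14 {E F : Type*} [NormedAddCommGroup E] [NormedSpace ℝ E] [CompleteSpace E]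
    [NormedAddCommGroup F] [NormedSpace ℝ F]
    (hrefl : Function.Surjective (NormedSpace.inclusionInDoubleDual ℝ E))
    (A : Set E) (B : Set F)
    (hAne : A.Nonempty) (hAbdd : Bornology.IsBounded A) (hAclosed : IsClosed A)
    (hAconv : Convex ℝ A) (hBne : B.Nonempty) (hBconv : Convex ℝ B)
    (L : E → F → ℝ)
    (hconc : ∀ v ∈ B, ConcaveOn ℝ A (fun u => L u v))
    (husc : ∀ v ∈ B, UpperSemicontinuousOn (fun u => L u v) A)
    (haff : ∀ u ∈ A, ∀ v₁ ∈ B, ∀ v₂ ∈ B, ∀ c : ℝ, 0 ≤ c → c ≤ 1 →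
      L u (c • v₁ + (1 - c) • v₂) = c * L u v₁ + (1 - c) * L u v₂)
    (hcont : ∀ u ∈ A, ContinuousOn (L u) B)
    (hbdd : BddAbove {r : ℝ | ∃ u ∈ A, ∃ v ∈ B, r = L u v})
    (hbdd' : BddBelow {r : ℝ | ∃ u ∈ A, ∃ v ∈ B, r = L u v}) :
    (⨆ u : A, ⨅ v : B, L u v) = ⨅ v : B, ⨆ u : A, L u v :=
  stmt14_general hrefl A B hAne hAbdd hAclosed hAconv hBne hBconv L hconc husc haff hcont hbdd'
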